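/- Let ν be a nonnegative integer and define, for k,l ≥ 0, V_{k,l} = (-1)^k (ν+k)! k! (-k)_l / ((ν+l)! (l!)^2) · c^{l+1/2} for a fixed positive real c, and W_{k,l} = (k!)^2 (ν+k)! / ((k-l)! (l!)^2 (ν+l)!) · c^{-(k+1/2)}, with 1/(k-l)! = 0 for l > k. Then for all i, j ≥ 0, Σ_{m} V_{i,m} W_{m,j} = δ_{i,j}, i.e., W is the inverse of the lower-triangular matrix V. -/
import Mathlib


open Finset

/-- Pochhammer symbol `(x)_k = x (x+1) ⋯ (x+k-1)`. -/
noncomputable def poch (x : ℝ) (k : ℕ) : ℝ := ∏ i ∈ Finset.range k, (x + i)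

/-- `1/n!` extended to integers: zero for negative arguments. -/
noncomputable def invFact (n : ℤ) : ℝ :=
  if 0 ≤ n then ((n.toNat).factorial : ℝ)⁻¹ else 0

lemma invFact_neg {n : ℤ} (h : n < 0) : invFact n = 0 := by
  simp [invFact, not_le.mpr h]

lemma invFact_natCast (n : ℕ) : invFact n = (n.factorial : ℝ)⁻¹ := by
  simp [invFact]

lemma poch_neg_nat (i : ℕ) : ∀ m ≤ i,
    poch (-(i:ℝ)) m = (-1)^m * (i.factorial : ℝ) / ((i - m).factorial : ℝ) := by
  intro m
  induction m with
  | zero =>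
    intro _
    simp only [poch, Finset.range_zero, Finset.prod_empty, pow_zero, one_mul, Nat.sub_zero]
    exact (div_self (by exact_mod_cast Nat.factorial_ne_zero i)).symm
  | succ m ih =>
    intro h
    have h' : m ≤ i := Nat.le_of_succ_le h
    rw [poch, Finset.prod_range_succ, ← poch, ih h']
    have h1 : (-(i:ℝ) + m) = -(((i - m : ℕ) : ℝ)) := by
      push_cast [Nat.cast_sub h']; ring
    have h2 : (i - m).factorial = (i - m) * (i - (m+1)).factorial := by
      have h4 : i - m = (i - (m+1)) + 1 := by omega
      rw [h4, Nat.factorial_succ, ← h4]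
    have h3 : ((i - m : ℕ) : ℝ) ≠ 0 := by
      have : 0 < i - m := by omega
      positivity
    have h5 : ((i - (m+1)).factorial : ℝ) ≠ 0 := by
      exact_mod_cast (Nat.factorial_ne_zero _)
    have h6 : (i:ℝ) - (m:ℝ) ≠ 0 := sub_ne_zero.mpr (by exact_mod_cast (by omega : i ≠ m))
    rw [h1, h2]
    push_cast
    field_simp
    ring

theorem V_inverse (ν : ℕ) (c : ℝ) (hc : 0 < c)
    (V W : ℕ → ℕ → ℝ)
    (hV : ∀ k l, V k l =
      (-1 : ℝ) ^ k * ((ν + k).factorial : ℝ) * (k.factorial : ℝ) * poch (-(k : ℝ)) l /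
        (((ν + l).factorial : ℝ) * ((l.factorial : ℝ)) ^ 2) * c ^ ((l : ℝ) + 1 / 2))
    (hW : ∀ k l, W k l =
      ((k.factorial : ℝ)) ^ 2 * ((ν + k).factorial : ℝ) * invFact ((k : ℤ) - l) /
        (((l.factorial : ℝ)) ^ 2 * ((ν + l).factorial : ℝ)) * c ^ (-((k : ℝ) + 1 / 2)))
    (i j : ℕ) :
    ∑ m ∈ Finset.range (i + 1), V i m * W m j = if i = j then 1 else 0 := by
  by_cases hji : j ≤ i
  · set n := i - j with hn
    have hsplit : ∑ m ∈ Finset.range (i+1), V i m * W m j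
        = ∑ m ∈ Finset.Ico j (i+1), V i m * W m j := by
      rw [Finset.range_eq_Ico, ← Finset.sum_Ico_consecutive _ (Nat.zero_le j) (by omega)]
      have hz : ∑ m ∈ Finset.Ico 0 j, V i m * W m j = 0 := by
        apply Finset.sum_eq_zero
        intro m hm
        rw [Finset.mem_Ico] at hm
        have hneg : (m : ℤ) - j < 0 := by omega
        rw [hW, invFact_neg hneg]
        ring
      rw [hz, zero_add]
    rw [hsplit, Finset.sum_Ico_eq_sum_range]
    have hrange : i + 1 - j = n + 1 := by omega
    rw [hrange]
    set K : ℝ := (-1)^(i+j) * ((ν+i).factorial : ℝ) * ((i.factorial:ℝ))^2 /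
      ((n.factorial : ℝ) * ((j.factorial:ℝ))^2 * ((ν+j).factorial : ℝ)) with hK
    have hterm : ∀ t ∈ Finset.range (n+1),
        V i (j + t) * W (j + t) j = K * ((-1)^t * (n.choose t : ℝ)) := by
      intro t ht
      simp only [Finset.mem_range] at ht
      have htn : t ≤ n := by omega
      have hjt : j + t ≤ i := by omega
      rw [hV, hW, poch_neg_nat i (j+t) hjt]
      have hifm : i - (j + t) = n - t := by omega
      have hinv : (((j+t : ℕ) : ℤ) - (j:ℕ)) = (t : ℤ) := by push_cast; ring
      rw [hifm, hinv, invFact_natCast]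
      have hcc : c ^ (((j+t : ℕ) : ℝ) + 1/2) * c ^ (-(((j+t:ℕ) : ℝ) + 1/2)) = 1 := by
        rw [← Real.rpow_add hc, add_neg_cancel, Real.rpow_zero]
      have hre : ∀ X Y : ℝ, (X * c ^ (((j+t : ℕ) : ℝ) + 1/2)) * (Y * c ^ (-(((j+t:ℕ) : ℝ) + 1/2)))
          = X * Y * (c ^ (((j+t : ℕ) : ℝ) + 1/2) * c ^ (-(((j+t:ℕ) : ℝ) + 1/2))) := by
        intro X Y; ring
      rw [hre, hcc, mul_one]
      have hch : (n.choose t : ℝ) = (n.factorial : ℝ) / ((t.factorial : ℝ) * ((n - t).factorial : ℝ)) :=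
        Nat.cast_choose ℝ htn
      rw [hch, hK]
      have e1 : ((t.factorial : ℝ)) ≠ 0 := by exact_mod_cast Nat.factorial_ne_zero _
      have e2 : (((n - t).factorial : ℝ)) ≠ 0 := by exact_mod_cast Nat.factorial_ne_zero _
      have e3 : ((n.factorial : ℝ)) ≠ 0 := by exact_mod_cast Nat.factorial_ne_zero _
      have e4 : ((j.factorial : ℝ)) ≠ 0 := by exact_mod_cast Nat.factorial_ne_zero _
      have e5 : (((j+t).factorial : ℝ)) ≠ 0 := by exact_mod_cast Nat.factorial_ne_zero _
      have e6 : (((ν+j).factorial : ℝ)) ≠ 0 := by exact_mod_cast Nat.factorial_ne_zero _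
      have e7 : (((ν+(j+t)).factorial : ℝ)) ≠ 0 := by exact_mod_cast Nat.factorial_ne_zero _
      field_simp
      ring
    rw [Finset.sum_congr rfl hterm, ← Finset.mul_sum]
    have hsum : ∑ t ∈ Finset.range (n+1), (-1:ℝ)^t * (n.choose t : ℝ) = if n = 0 then 1 else 0 := by
      have h := Int.alternating_sum_range_choose (n := n)
      have h2 := congrArg (Int.cast : ℤ → ℝ) h
      push_cast at h2
      convert h2 using 2
    rw [hsum]
    by_cases hn0 : n = 0
    · have hij : i = j := by omega
      rw [if_pos hn0, if_pos hij, mul_one, hK, hn0, hij]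
      have h1 : (-1:ℝ)^(j+j) = 1 := by rw [← two_mul, pow_mul]; norm_num
      rw [h1, Nat.factorial_zero]
      have e4 : ((j.factorial : ℝ)) ≠ 0 := by exact_mod_cast Nat.factorial_ne_zero _
      have e6 : (((ν+j).factorial : ℝ)) ≠ 0 := by exact_mod_cast Nat.factorial_ne_zero _
      field_simp
      ring
    · have hij : i ≠ j := by omega
      simp [hn0, hij]
  · have hij : i ≠ j := by omega
    simp only [hij, if_false]
    apply Finset.sum_eq_zero
    intro m hm
    simp only [Finset.mem_range] at hm
    have hneg : (m : ℤ) - j < 0 := by omega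
    rw [hW, invFact_neg hneg]
    ring
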